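/- Suppose G_z is a positive definite Hermitian M×M complex matrix and W_s ∈ ℂ^{M×K} is a fixed matrix of full column rank. Then the function J(W_z) = trace(W_z^H G_z W_z) − 2 log|det [W_s, W_z]|, defined on the set of matrices W_z ∈ ℂ^{M×(M−K)} such that [W_s, W_z] is invertible, is bounded from below and attains its minimum at some such W_z. -/

import Mathlib

/-!
For `F = [W_s, W_z]` the Gram matrix `Fᴴ G_z F` is the block matrix `[[A, B], [Bᴴ, D]]` with
`A = W_sᴴ G_z W_s` independent of `W_z` and `D = W_zᴴ G_z W_z`, and
`|det F|² = det (Fᴴ G_z F) / det G_z`. With the Schur complement `S = D - Bᴴ A⁻¹ B` one has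
`det (Fᴴ G_z F) = det A · det S` and `tr D ≥ tr S`, so
`J(W_z) ≥ tr S - log det S - log det A + log det G_z ≥ L - log det A + log det G_z`
by `λ - log λ ≥ 1` on the eigenvalues of `S`. Both inequalities are equalities when `B = 0` and
`D = 1`, i.e. when the columns of `W_z` are a `G_z`-orthonormal basis of the `G_z`-orthogonal
complement of the columns of `W_s`.
-/

/- M×M complex matrices are encoded as matrices indexed by `Fin K ⊕ Fin L` with `M = K + L`;
`[W_s, W_z]` is `Matrix.fromCols W_s W_z`, and full column rank of `W_s` is linear independence
of its columns (the rows of `W_sᵀ`). -/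

open Matrix
open scoped ComplexOrder

/-- The cost function `J(W_z) = trace(W_z^H G_z W_z) − 2 log|det [W_s, W_z]|`. -/
noncomputable def Jz {K L : ℕ}
    (Gz : Matrix (Fin K ⊕ Fin L) (Fin K ⊕ Fin L) ℂ)
    (Ws : Matrix (Fin K ⊕ Fin L) (Fin K) ℂ)
    (Wz : Matrix (Fin K ⊕ Fin L) (Fin L) ℂ) : ℝ :=
  (Matrix.trace (Wzᴴ * Gz * Wz)).re
    - 2 * Real.log ‖(Matrix.fromCols Ws Wz).det‖

namespace Matrix

theorem conjTranspose_fromCols_mul_mul_fromCols {R l m n : Type*} [Fintype n] [Semiring R]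
    [StarRing R] {G : Matrix n n R} (hG : G.IsHermitian) (V : Matrix n m R) (W : Matrix n l R) :
    (fromCols V W)ᴴ * G * fromCols V W =
      fromBlocks (Vᴴ * G * V) (Vᴴ * G * W) (Vᴴ * G * W)ᴴ (Wᴴ * G * W) := by
  rw [conjTranspose_fromCols_eq_fromRows_conjTranspose, fromRows_mul, fromRows_mul_fromCols,
    conjTranspose_mul, conjTranspose_mul, hG.eq, conjTranspose_conjTranspose]
  simp only [Matrix.mul_assoc]

variable {𝕜 : Type*} [RCLike 𝕜] {l m n : Type*} [Fintype l] [Fintype m] [Fintype n]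

theorem PosDef.card_le_re_trace_sub_log_norm_det [DecidableEq n] {X : Matrix n n ℂ}
    (hX : X.PosDef) : (Fintype.card n : ℝ) ≤ X.trace.re - Real.log ‖X.det‖ := by
  have hpos := hX.eigenvalues_pos
  rw [hX.1.trace_eq_sum_eigenvalues, hX.1.det_eq_prod_eigenvalues, Complex.re_sum, norm_prod,
    Real.log_prod fun i _ => by simpa using (hpos i).ne', ← Finset.sum_sub_distrib]
  calc (Fintype.card n : ℝ) = ∑ _i : n, (1 : ℝ) := by simp
    _ ≤ _ := Finset.sum_le_sum fun i _ => by
      have := Real.log_le_sub_one_of_pos (hpos i)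
      simp [abs_of_pos (hpos i)]
      linarith

theorem PosDef.schur_complement₁₁ [DecidableEq m] {A : Matrix m m ℂ} {B : Matrix m n ℂ}
    {D : Matrix n n ℂ} (h : (fromBlocks A B Bᴴ D).PosDef) : (D - Bᴴ * A⁻¹ * B).PosDef := by
  have hA : A.PosDef := h.submatrix Sum.inl_injective
  have := hA.isUnit.invertible
  refine PosDef.of_dotProduct_mulVec_pos ((IsHermitian.fromBlocks₁₁ B D hA.1).mp h.1)
    fun x hx => ?_
  have hne : Sum.elim (-((A⁻¹ * B) *ᵥ x)) x ≠ 0 := fun h0 =>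
    hx (funext fun i => by simpa using congrFun h0 (Sum.inr i))
  have hq := h.dotProduct_mulVec_pos hne
  rwa [dotProduct_mulVec, schur_complement_eq₁₁ B D _ _ hA.1, neg_add_cancel,
    dotProduct_zero, zero_add, ← dotProduct_mulVec] at hq

theorem PosDef.card_sub_log_norm_det_le_of_fromBlocks [DecidableEq m] [DecidableEq n]
    {A : Matrix m m ℂ} {B : Matrix m n ℂ} {D : Matrix n n ℂ}
    (h : (fromBlocks A B Bᴴ D).PosDef) :
    (Fintype.card n : ℝ) - Real.log ‖A.det‖ ≤
      D.trace.re - Real.log ‖(fromBlocks A B Bᴴ D).det‖ := by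
  have hA : A.PosDef := h.submatrix Sum.inl_injective
  have := hA.isUnit.invertible
  have hS := h.schur_complement₁₁
  have hdet : (fromBlocks A B Bᴴ D).det = A.det * (D - Bᴴ * A⁻¹ * B).det := by
    rw [det_fromBlocks₁₁, invOf_eq_nonsing_inv]
  have htrace : D.trace.re = (D - Bᴴ * A⁻¹ * B).trace.re + (Bᴴ * A⁻¹ * B).trace.re := by
    rw [← Complex.add_re, ← trace_add, sub_add_cancel]
  have hcorr : 0 ≤ (Bᴴ * A⁻¹ * B).trace.re :=
    (Complex.le_def.mp (hA.inv.posSemidef.conjTranspose_mul_mul_same B).trace_nonneg).1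
  rw [hdet, norm_mul, Real.log_mul (norm_ne_zero_iff.mpr hA.det_pos.ne')
    (norm_ne_zero_iff.mpr hS.det_pos.ne')]
  linarith [hS.card_le_re_trace_sub_log_norm_det]

theorem exists_conjTranspose_mul_eq_zero_and_conjTranspose_mul_self_eq_one
    [DecidableEq l] [DecidableEq n] (V : Matrix n m 𝕜)
    (h : Fintype.card m + Fintype.card l ≤ Fintype.card n) :
    ∃ Y : Matrix n l 𝕜, Vᴴ * Y = 0 ∧ Yᴴ * Y = 1 := by
  let f : EuclideanSpace 𝕜 n →ₗ[𝕜] EuclideanSpace 𝕜 m := toLpLin 2 2 Vᴴ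
  have hker : Fintype.card l ≤ Module.finrank 𝕜 (LinearMap.ker f) := by
    have hsum := LinearMap.finrank_range_add_finrank_ker f
    have hrange := (LinearMap.range f).finrank_le
    rw [finrank_euclideanSpace] at hsum hrange
    omega
  obtain ⟨ι⟩ : Nonempty (l ↪ Fin (Module.finrank 𝕜 (LinearMap.ker f))) :=
    Function.Embedding.nonempty_of_card_le (by rwa [Fintype.card_fin])
  let b : l → LinearMap.ker f := stdOrthonormalBasis 𝕜 (LinearMap.ker f) ∘ ι
  have hb : Orthonormal 𝕜 b :=
    (stdOrthonormalBasis 𝕜 (LinearMap.ker f)).orthonormal.comp ι ι.injective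
  refine ⟨of fun i j => (b j : EuclideanSpace 𝕜 n) i, ?_, ?_⟩
  · ext i j
    have hmem : Vᴴ *ᵥ (b j : EuclideanSpace 𝕜 n).ofLp = 0 :=
      congrArg WithLp.ofLp (LinearMap.mem_ker.mp (b j).2)
    simpa [mul_apply, mulVec, dotProduct] using congrFun hmem i
  · ext i j
    have := orthonormal_iff_ite.mp hb i j
    rw [Submodule.coe_inner, EuclideanSpace.inner_eq_star_dotProduct] at this
    simpa [mul_apply, dotProduct, one_apply, mul_comm] using this

open scoped MatrixOrder in
theorem PosDef.exists_isUnit_and_eq_conjTranspose_mul_self [DecidableEq n] {G : Matrix n n 𝕜}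
    (hG : G.PosDef) :
    ∃ R : Matrix n n 𝕜, IsUnit R ∧ G = Rᴴ * R := by
  obtain ⟨R, rfl⟩ := CStarAlgebra.nonneg_iff_eq_star_mul_self.mp hG.posSemidef.nonneg
  have hdet : IsUnit (star R * R).det := (isUnit_iff_isUnit_det _).mp hG.isUnit
  rw [det_mul] at hdet
  exact ⟨R, (isUnit_iff_isUnit_det R).mpr (isUnit_of_mul_isUnit_right hdet), rfl⟩

/-- With `G = Rᴴ R`, this is the Euclidean statement for `R V`, transported back by `R⁻¹`. -/
theorem PosDef.exists_conjTranspose_mul_mul_eq_zero_and_eq_one [DecidableEq l] [DecidableEq n]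
    {G : Matrix n n 𝕜} (hG : G.PosDef) (V : Matrix n m 𝕜)
    (h : Fintype.card m + Fintype.card l ≤ Fintype.card n) :
    ∃ W : Matrix n l 𝕜, Vᴴ * G * W = 0 ∧ Wᴴ * G * W = 1 := by
  obtain ⟨R, hR, rfl⟩ := hG.exists_isUnit_and_eq_conjTranspose_mul_self
  obtain ⟨Y, hVY, hYY⟩ :=
    exists_conjTranspose_mul_eq_zero_and_conjTranspose_mul_self_eq_one (R * V) h
  have hRR : R * R⁻¹ = 1 := mul_nonsing_inv R ((isUnit_iff_isUnit_det R).mp hR)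
  refine ⟨R⁻¹ * Y, ?_, ?_⟩
  · rw [conjTranspose_mul] at hVY
    simp only [Matrix.mul_assoc] at hVY ⊢
    rw [← Matrix.mul_assoc R, hRR, Matrix.one_mul, hVY]
  · rw [conjTranspose_mul]
    simp only [Matrix.mul_assoc]
    rw [← Matrix.mul_assoc R, hRR, Matrix.one_mul, ← Matrix.mul_assoc R⁻¹ᴴ, ← conjTranspose_mul,
      hRR, conjTranspose_one, Matrix.one_mul, hYY]

theorem norm_det_conjTranspose_mul_mul_same [DecidableEq n] (F G : Matrix n n ℂ) :
    ‖(Fᴴ * G * F).det‖ = ‖F.det‖ ^ 2 * ‖G.det‖ := by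
  rw [det_mul, det_mul, det_conjTranspose, norm_mul, norm_mul, norm_star]
  ring

end Matrix

theorem Jz_eq_re_trace_sub_log_norm_det_gram {K L : ℕ}
    {Gz : Matrix (Fin K ⊕ Fin L) (Fin K ⊕ Fin L) ℂ} (hGz : Gz.PosDef)
    (Ws : Matrix (Fin K ⊕ Fin L) (Fin K) ℂ) {Wz : Matrix (Fin K ⊕ Fin L) (Fin L) ℂ}
    (hF : IsUnit (fromCols Ws Wz).det) :
    Jz Gz Ws Wz = (Wzᴴ * Gz * Wz).trace.re
      - Real.log ‖((fromCols Ws Wz)ᴴ * Gz * fromCols Ws Wz).det‖ + Real.log ‖Gz.det‖ := by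
  rw [Jz, norm_det_conjTranspose_mul_mul_same, Real.log_mul
    (pow_ne_zero 2 (norm_ne_zero_iff.mpr hF.ne_zero)) (norm_ne_zero_iff.mpr hGz.det_pos.ne'),
    Real.log_pow]
  push_cast
  ring

theorem Jz_bddBelow_and_attains_min_general (K L : ℕ)
    (Gz : Matrix (Fin K ⊕ Fin L) (Fin K ⊕ Fin L) ℂ) (hGz : Gz.PosDef)
    (Ws : Matrix (Fin K ⊕ Fin L) (Fin K) ℂ)
    (hWs : LinearIndependent ℂ Wsᵀ) :
    (∃ c : ℝ, ∀ Wz : Matrix (Fin K ⊕ Fin L) (Fin L) ℂ,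
        IsUnit (Matrix.fromCols Ws Wz).det → c ≤ Jz Gz Ws Wz) ∧
    (∃ Wz₀ : Matrix (Fin K ⊕ Fin L) (Fin L) ℂ,
        IsUnit (Matrix.fromCols Ws Wz₀).det ∧
        ∀ Wz : Matrix (Fin K ⊕ Fin L) (Fin L) ℂ,
          IsUnit (Matrix.fromCols Ws Wz).det → Jz Gz Ws Wz₀ ≤ Jz Gz Ws Wz) := by
  set A := Wsᴴ * Gz * Ws
  have hA : A.PosDef := hGz.conjTranspose_mul_mul_same (mulVec_injective_iff.mpr hWs)
  set c : ℝ := L - Real.log ‖A.det‖ + Real.log ‖Gz.det‖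
  have hlower : ∀ Wz, IsUnit (fromCols Ws Wz).det → c ≤ Jz Gz Ws Wz := fun Wz hF => by
    have hgram := hGz.conjTranspose_mul_mul_same
      (mulVec_injective_iff_isUnit.mpr ((isUnit_iff_isUnit_det _).mpr hF))
    rw [conjTranspose_fromCols_mul_mul_fromCols hGz.1] at hgram
    have := hgram.card_sub_log_norm_det_le_of_fromBlocks
    rw [Jz_eq_re_trace_sub_log_norm_det_gram hGz Ws hF,
      conjTranspose_fromCols_mul_mul_fromCols hGz.1]
    simp only [Fintype.card_fin] at this
    linarith
  obtain ⟨Wz₀, hB₀, hD₀⟩ := hGz.exists_conjTranspose_mul_mul_eq_zero_and_eq_one Ws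
    (l := Fin L) (by simp)
  have hgram₀ : (fromCols Ws Wz₀)ᴴ * Gz * fromCols Ws Wz₀ = fromBlocks A 0 0 1 := by
    rw [conjTranspose_fromCols_mul_mul_fromCols hGz.1, hB₀, hD₀, conjTranspose_zero]
  have hF₀ : IsUnit (fromCols Ws Wz₀).det := by
    refine isUnit_of_mul_isUnit_right (x := star (fromCols Ws Wz₀).det * Gz.det) ?_
    rw [← det_conjTranspose, ← det_mul, ← det_mul, hgram₀, det_fromBlocks_zero₂₁, det_one, mul_one]
    exact (isUnit_iff_isUnit_det A).mp hA.isUnit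
  have hJ₀ : Jz Gz Ws Wz₀ = c := by
    rw [Jz_eq_re_trace_sub_log_norm_det_gram hGz Ws hF₀, hD₀, hgram₀, det_fromBlocks_zero₂₁,
      det_one, mul_one, trace_one]
    simp [c]
  exact ⟨⟨c, hlower⟩, Wz₀, hF₀, fun Wz hF => hJ₀ ▸ hlower Wz hF⟩

/-- If `G_z` is positive definite and `W_s` has full column rank, then
`W_z ↦ trace(W_z^H G_z W_z) − 2 log|det [W_s, W_z]|` is bounded from below on the
set of `W_z` making `[W_s, W_z]` invertible, and attains its minimum there. -/
theorem Jz_bddBelow_and_attains_min (K L : ℕ) (hK : 1 ≤ K) (hL : 1 ≤ L)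
    (Gz : Matrix (Fin K ⊕ Fin L) (Fin K ⊕ Fin L) ℂ) (hGz : Gz.PosDef)
    (Ws : Matrix (Fin K ⊕ Fin L) (Fin K) ℂ)
    (hWs : LinearIndependent ℂ Wsᵀ) :
    (∃ c : ℝ, ∀ Wz : Matrix (Fin K ⊕ Fin L) (Fin L) ℂ,
        IsUnit (Matrix.fromCols Ws Wz).det → c ≤ Jz Gz Ws Wz) ∧
    (∃ Wz₀ : Matrix (Fin K ⊕ Fin L) (Fin L) ℂ,
        IsUnit (Matrix.fromCols Ws Wz₀).det ∧
        ∀ Wz : Matrix (Fin K ⊕ Fin L) (Fin L) ℂ,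
          IsUnit (Matrix.fromCols Ws Wz).det → Jz Gz Ws Wz₀ ≤ Jz Gz Ws Wz) :=
  Jz_bddBelow_and_attains_min_general K L Gz hGz Ws hWs
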